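/- arXiv:1609.09394 — 2 statements merged into one kernel-verified Lean document; each statement's English description precedes it below -/
import Mathlib

section
/- Let J : ℝ → ℝ be a positive differentiable function and let C > 0, A > 0 be constants with J'(t) ≤ -J(t)³/A² + C·J(t) for all t ≥ 0. Then limsup_{t→∞} J(t) ≤ √C · A. -/
/-!
Fix any level `b > √C · A`. Above `b` the right-hand side `x (C - x²/A²)` of the differential
inequality is at most `-δ` for some `δ > 0`, so the positive function `J` cannot stay above `b`
for all `t ≥ 0` (it would decrease linearly), and once it reaches `b` it can never cross it
again. Hence `J ≤ b` eventually, and `b ↓ √C · A` gives the bound on the limsup.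
-/

open Filter Set

lemma exists_le_of_deriv_le_neg {f : ℝ → ℝ} (hf : Differentiable ℝ f) (hbdd : BddBelow (range f))
    {a b δ : ℝ} (hδ : 0 < δ) (hderiv : ∀ t, a ≤ t → b ≤ f t → deriv f t ≤ -δ) :
    ∃ t, a ≤ t ∧ f t ≤ b := by
  by_contra! habove
  obtain ⟨m, hm⟩ := hbdd
  set t := a + (f a - m + 1) / δ
  have hat : a ≤ t := le_add_of_nonneg_right <|
    div_nonneg (by linarith [hm (mem_range_self a)]) hδ.le
  have hdecay : f t - f a ≤ -δ * (t - a) :=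
    (convex_Ici a).image_sub_le_mul_sub_of_deriv_le hf.continuous.continuousOn
      (hf.differentiableOn.mono (subset_univ _)) (fun s hs => by
        rw [interior_Ici] at hs
        exact hderiv s hs.le (habove s hs.le).le) a self_mem_Ici t hat hat
  have : -δ * (t - a) = -(f a - m + 1) := by simp only [t]; field_simp; ring
  linarith [hm (mem_range_self t)]

lemma le_of_deriv_neg_of_eq {f : ℝ → ℝ} (hf : Differentiable ℝ f) {t₀ b : ℝ} (h₀ : f t₀ ≤ b)
    (hderiv : ∀ t, t₀ ≤ t → f t = b → deriv f t < 0) {t : ℝ} (ht : t₀ ≤ t) : f t ≤ b :=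
  image_le_of_deriv_right_lt_deriv_boundary (B := fun _ => b) (B' := fun _ => 0)
    hf.continuous.continuousOn (fun x _ => (hf x).hasDerivAt.hasDerivWithinAt) h₀
    (fun x => hasDerivAt_const x b) (fun x hx hxb => hderiv x hx.1 hxb) ⟨ht, le_rfl⟩

lemma eventually_le_of_deriv_le_neg {f : ℝ → ℝ} (hf : Differentiable ℝ f)
    (hbdd : BddBelow (range f)) {a b δ : ℝ} (hδ : 0 < δ)
    (hderiv : ∀ t, a ≤ t → b ≤ f t → deriv f t ≤ -δ) : ∀ᶠ t in atTop, f t ≤ b := by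
  obtain ⟨t₀, hat₀, hft₀⟩ := exists_le_of_deriv_le_neg hf hbdd hδ hderiv
  filter_upwards [eventually_ge_atTop t₀] with t ht
  exact le_of_deriv_neg_of_eq hf hft₀
    (fun s hs hfs => (hderiv s (hat₀.trans hs) hfs.ge).trans_lt (neg_neg_of_pos hδ)) ht

lemma lt_sq_div_sq_of_sqrt_mul_lt {A b C : ℝ} (hA : 0 < A) (hb : √C * A < b) :
    C < b ^ 2 / A ^ 2 := by
  have hroot : 0 ≤ √C * A := by positivity
  have hsq : (√C * A) ^ 2 < b ^ 2 := pow_lt_pow_left₀ hb hroot two_ne_zero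
  rw [mul_pow, Real.sq_sqrt'] at hsq
  rw [lt_div_iff₀ (by positivity)]
  nlinarith [le_max_left C 0]

lemma cubic_drift_le {A b C x : ℝ} (hb : 0 < b) (hbC : C ≤ b ^ 2 / A ^ 2) (hbx : b ≤ x) :
    -x ^ 3 / A ^ 2 + C * x ≤ -(b * (b ^ 2 / A ^ 2 - C)) := by
  have hsq : b ^ 2 / A ^ 2 ≤ x ^ 2 / A ^ 2 := by gcongr
  calc -x ^ 3 / A ^ 2 + C * x = -(x * (x ^ 2 / A ^ 2 - C)) := by ring
    _ ≤ -(b * (b ^ 2 / A ^ 2 - C)) := by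
      gcongr
      linarith

theorem stmt1_general (J : ℝ → ℝ) (C A : ℝ) (hA : 0 < A)
    (hJ : Differentiable ℝ J) (hpos : ∀ t, 0 < J t)
    (hineq : ∀ t, 0 ≤ t → deriv J t ≤ -(J t)^3 / A^2 + C * J t) :
    Filter.limsup J Filter.atTop ≤ Real.sqrt C * A := by
  refine le_of_forall_gt_imp_ge_of_dense fun b hb => ?_
  have hb0 : 0 < b := (by positivity : 0 ≤ √C * A).trans_lt hb
  have hbC : C < b ^ 2 / A ^ 2 := lt_sq_div_sq_of_sqrt_mul_lt hA hb
  have hbdd : BddBelow (range J) := ⟨0, forall_mem_range.2 fun t => (hpos t).le⟩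
  refine limsup_le_of_le (isCoboundedUnder_le_of_le atTop fun t => (hpos t).le) ?_
  exact eventually_le_of_deriv_le_neg hJ hbdd (mul_pos hb0 (sub_pos.2 hbC))
    fun t ht hbt => (hineq t ht).trans (cubic_drift_le hb0 hbC.le hbt)

/-- ODE comparison: if `J > 0` is differentiable with
`J' ≤ -J³/A² + C·J` for all `t ≥ 0` (`A, C > 0`), then
`limsup_{t→∞} J(t) ≤ √C · A`. -/
theorem stmt1 (J : ℝ → ℝ) (C A : ℝ) (hC : 0 < C) (hA : 0 < A)
    (hJ : Differentiable ℝ J) (hpos : ∀ t, 0 < J t)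
    (hineq : ∀ t, 0 ≤ t → deriv J t ≤ -(J t)^3 / A^2 + C * J t) :
    Filter.limsup J Filter.atTop ≤ Real.sqrt C * A :=
  stmt1_general J C A hA hJ hpos hineq
end

section
/- Let λ ≤ -1/4 and let J : ℝ → ℝ be a nonnegative differentiable function satisfying J'(t) ≤ 2(λ + 1/4)J(t) - (2/L)J(t)² for all t ≥ 0 with L > 0. Then J(t) → 0 as t → ∞. -/
/-!
Since `λ + 1/4 ≤ 0`, the inequality gives `J' ≤ -(2/L) J²`, so `J` is nonincreasing. If `J`
stayed above some `ε > 0`, then `J' ≤ -(2/L) ε²` and `J` would decrease linearly, eventually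
becoming negative.
-/

open Filter Set Topology

section

variable {J : ℝ → ℝ}

lemma sub_le_mul_sub_of_deriv_le_on_Ici (hJ : Differentiable ℝ J) {C : ℝ}
    (hC : ∀ t, 0 ≤ t → deriv J t ≤ C) {x y : ℝ} (hx : 0 ≤ x) (hxy : x ≤ y) :
    J y - J x ≤ C * (y - x) :=
  (convex_Ici 0).image_sub_le_mul_sub_of_deriv_le hJ.continuous.continuousOn
    hJ.differentiableOn (fun t ht => hC t (interior_subset ht)) x hx y (hx.trans hxy) hxy

lemma exists_neg_lt_deriv_of_nonneg (hJ : Differentiable ℝ J) (hnn : ∀ t, 0 ≤ J t)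
    {c : ℝ} (hc : 0 < c) : ∃ t, 0 ≤ t ∧ -c < deriv J t := by
  by_contra! hdecr
  have hT : 0 ≤ J 0 / c + 1 := by have := hnn 0; positivity
  have hdrop := sub_le_mul_sub_of_deriv_le_on_Ici hJ hdecr le_rfl hT
  have hcT : c * (J 0 / c + 1) = J 0 + c := by field_simp
  nlinarith [hnn (J 0 / c + 1)]

theorem tendsto_zero_of_deriv_le_neg_mul_sq (hJ : Differentiable ℝ J) (hnn : ∀ t, 0 ≤ J t)
    {a : ℝ} (ha : 0 < a) (hineq : ∀ t, 0 ≤ t → deriv J t ≤ -(a * J t ^ 2)) :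
    Tendsto J atTop (𝓝 0) := by
  have hanti : ∀ {x y : ℝ}, 0 ≤ x → x ≤ y → J y ≤ J x := fun hx hxy => by
    have hderiv : ∀ t, 0 ≤ t → deriv J t ≤ 0 := fun t ht =>
      (hineq t ht).trans (neg_nonpos.2 (by positivity))
    simpa using sub_le_mul_sub_of_deriv_le_on_Ici hJ hderiv hx hxy
  refine tendsto_order.2 ⟨fun b hb => Eventually.of_forall fun t => hb.trans_le (hnn t),
    fun ε hε => ?_⟩
  obtain ⟨T, hT, hJT⟩ : ∃ T, 0 ≤ T ∧ J T < ε := by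
    by_contra! hstay
    obtain ⟨t, ht, hslow⟩ := exists_neg_lt_deriv_of_nonneg hJ hnn (by positivity : 0 < a * ε ^ 2)
    have hεJ : ε ^ 2 ≤ J t ^ 2 := pow_le_pow_left₀ hε.le (hstay t ht) 2
    nlinarith [hineq t ht]
  filter_upwards [eventually_ge_atTop T] with t ht using (hanti hT ht).trans_lt hJT

end

/-- If `λ ≤ -1/4` and the nonnegative differentiable `J` satisfies
`J' ≤ 2(λ + 1/4) J - (2/L) J²` for `t ≥ 0` (`L > 0`), then `J(t) → 0`. -/
theorem stmt2 (J : ℝ → ℝ) (lam L : ℝ) (hlam : lam ≤ -(1/4)) (hL : 0 < L)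
    (hJ : Differentiable ℝ J) (hnn : ∀ t, 0 ≤ J t)
    (hineq : ∀ t, 0 ≤ t →
      deriv J t ≤ 2 * (lam + 1/4) * J t - (2 / L) * (J t)^2) :
    Filter.Tendsto J Filter.atTop (nhds 0) := by
  refine tendsto_zero_of_deriv_le_neg_mul_sq hJ hnn (by positivity : 0 < 2 / L) fun t ht => ?_
  have hlin : 2 * (lam + 1/4) * J t ≤ 0 :=
    mul_nonpos_of_nonpos_of_nonneg (by linarith) (hnn t)
  linarith [hineq t ht]
end
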